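/- If the continued fraction expansion of √f has period 2m with 2m ≡ 2 (mod 4), and (c, h) is the fundamental Pell solution, then h·A_{m−1} − (c − 1)·B_{m−1} = 0, where Aₖ/Bₖ are the convergents of √f. -/

import Mathlib

/-- The pair `(rₖ, sₖ)` of the continued fraction algorithm for `√f`:
`r₀ = 0`, `s₀ = 1`, `r_{k+1} = aₖ sₖ − rₖ`, `s_{k+1} = (f − r_{k+1}²)/sₖ`,
where `aₖ = ⌊(√f + rₖ)/sₖ⌋ = ⌊(⌊√f⌋ + rₖ)/sₖ⌋`. -/
def cfRS (f : ℕ) : ℕ → ℤ × ℤ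
  | 0 => (0, 1)
  | k + 1 =>
    let p := cfRS f k
    let a := Int.fdiv ((Nat.sqrt f : ℤ) + p.1) p.2
    let r' := a * p.2 - p.1
    (r', Int.fdiv ((f : ℤ) - r' ^ 2) p.2)

/-- The `k`-th partial quotient `aₖ` of the continued fraction of `√f`. -/
def cfA (f : ℕ) (k : ℕ) : ℤ :=
  Int.fdiv ((Nat.sqrt f : ℤ) + (cfRS f k).1) (cfRS f k).2

/-- Numerators of the convergents of `√f`, shifted by 2:
`cfNum f (k+2) = Aₖ`, with `A₋₂ = 0`, `A₋₁ = 1`. -/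
def cfNum (f : ℕ) : ℕ → ℤ
  | 0 => 0
  | 1 => 1
  | k + 2 => cfA f k * cfNum f (k + 1) + cfNum f k

/-- Denominators of the convergents of `√f`, shifted by 2:
`cfDen f (k+2) = Bₖ`, with `B₋₂ = 1`, `B₋₁ = 0`. -/
def cfDen (f : ℕ) : ℕ → ℤ
  | 0 => 1
  | 1 => 0
  | k + 2 => cfA f k * cfDen f (k + 1) + cfDen f k

/-- `p` is a period of the (eventually periodic) partial quotient sequence of `√f`. -/
def CFIsPeriod (f p : ℕ) : Prop :=
  0 < p ∧ ∀ k, 1 ≤ k → cfA f (k + p) = cfA f k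

/-- `p` is the (minimal) period of the continued fraction expansion of `√f`. -/
def CFPeriod (f p : ℕ) : Prop :=
  CFIsPeriod f p ∧ ∀ q, CFIsPeriod f q → p ≤ q

/-- `(c, h)` is the fundamental (smallest positive) solution of `c² − f h² = 1`. -/
def IsFundamentalPell (f : ℕ) (c h : ℤ) : Prop :=
  0 < c ∧ 0 < h ∧ c ^ 2 - (f : ℤ) * h ^ 2 = 1 ∧
    ∀ c' h' : ℤ, 0 < c' → 0 < h' → c' ^ 2 - (f : ℤ) * h' ^ 2 = 1 → c ≤ c'

/-!
By Legendre's theorem `c / h` is a convergent `Aₙ / Bₙ` of `√f`, and the norm identity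
`Aₖ₋₁² - f Bₖ₋₁² = (-1)ᵏ sₖ` forces `sₙ₊₁ = 1`. Since `sⱼ = 1` makes `j` a period of the partial
quotients, `2m ≤ n + 1`.

Conversely, equal tails of partial quotients give equal complete quotients `(√f + rₖ) / sₖ`, so the
period also forces `s₂ₘ = 1`. Read backwards from there, the pairs `(rₖ₊₁, sₖ)` obey the same
recursion as the pairs `(rₖ, sₖ)`, so the period is palindromic and `rₘ₊₁ = rₘ`.

With this symmetry, and `A = Aₘ₋₁`, `B = Bₘ₋₁`, the unit `(A + B√f)² / sₘ = c₁ + h₁√f` has integer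
coordinates and norm `(A² - f B²)² / sₘ² = 1` (as `m` is odd). Since `h₁ ≤ 2AB < 2ch`, it is the
fundamental unit, so `sₘ h = 2AB` and `sₘ c = A² + f B²`, which is the claim.
-/

open Filter Topology

theorem Int.floor_div_intCast_of_pos (x : ℝ) {d : ℤ} (hd : 0 < d) : ⌊x / d⌋ = ⌊x⌋ / d := by
  lift d to ℕ using hd.le
  exact_mod_cast Int.floor_div_natCast x d

namespace Real

theorem tendsto_convergent (ξ : ℝ) :
    Tendsto (fun n ↦ (ξ.convergent n : ℝ)) atTop (𝓝 ξ) := by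
  simpa only [funext (convs_eq_convergent ξ)] using GenContFract.of_convergence ξ

section Digits

variable {x y : ℕ → ℝ}

theorem convergent_eq_of_floor_eq (hx : ∀ k, x (k + 1) = (Int.fract (x k))⁻¹)
    (hy : ∀ k, y (k + 1) = (Int.fract (y k))⁻¹) (hxy : ∀ k, ⌊x k⌋ = ⌊y k⌋) (n : ℕ) :
    (x 0).convergent n = (y 0).convergent n := by
  induction n generalizing x y with
  | zero => simp only [convergent_zero, hxy 0]
  | succ n ih =>
    rw [convergent_succ, convergent_succ, ← hx, ← hy, hxy 0,
      ih (x := fun k ↦ x (k + 1)) (y := fun k ↦ y (k + 1)) (fun k ↦ hx (k + 1))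
        (fun k ↦ hy (k + 1)) (fun k ↦ hxy (k + 1))]

theorem eq_of_floor_eq (hx : ∀ k, x (k + 1) = (Int.fract (x k))⁻¹)
    (hy : ∀ k, y (k + 1) = (Int.fract (y k))⁻¹) (hxy : ∀ k, ⌊x k⌋ = ⌊y k⌋) : x 0 = y 0 := by
  refine tendsto_nhds_unique (tendsto_convergent (x 0)) ?_
  simpa only [convergent_eq_of_floor_eq hx hy hxy] using tendsto_convergent (y 0)

end Digits

end Real

/-- The continuant `K(a₀, …, a_{n-2})`, indexed so that `continuant a (n + 2)` is the numerator
of `[a₀; a₁, …, aₙ]`. -/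
def continuant (a : ℕ → ℤ) : ℕ → ℤ
  | 0 => 0
  | 1 => 1
  | n + 2 => a n * continuant a (n + 1) + continuant a n

namespace continuant

variable {a : ℕ → ℤ}

theorem add_two_eq_head (a : ℕ → ℤ) : ∀ n, continuant a (n + 2) =
    a 0 * continuant (fun i ↦ a (i + 1)) (n + 1) + continuant (fun i ↦ a (i + 2)) n
  | 0 => by simp [continuant]
  | 1 => by simp [continuant]; ring
  | n + 2 => by
    rw [continuant, add_two_eq_head a (n + 1), add_two_eq_head a n]
    simp only [continuant]
    ring

theorem nonneg_and_pos (ha : ∀ k, 1 ≤ a k) : ∀ n, 0 ≤ continuant a n ∧ 0 < continuant a (n + 1)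
  | 0 => ⟨le_rfl, one_pos⟩
  | n + 1 => by
    obtain ⟨h0, h1⟩ := nonneg_and_pos ha n
    exact ⟨by linarith, by rw [continuant]; nlinarith [ha n]⟩

theorem nonneg (ha : ∀ k, 1 ≤ a k) (n : ℕ) : 0 ≤ continuant a n :=
  (nonneg_and_pos ha n).1

theorem pos (ha : ∀ k, 1 ≤ a k) (n : ℕ) : 0 < continuant a (n + 1) :=
  (nonneg_and_pos ha n).2

theorem monotone (ha : ∀ k, 1 ≤ a k) : Monotone (continuant a) := by
  refine monotone_nat_of_le_succ fun n ↦ ?_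
  cases n with
  | zero => simp [continuant]
  | succ n =>
    rw [continuant]
    nlinarith [ha n, nonneg ha n, pos ha n]

theorem strictMono_add_two (ha : ∀ k, 1 ≤ a k) : StrictMono fun n ↦ continuant a (n + 2) :=
  strictMono_nat_of_lt_succ fun n ↦ by
    show continuant a (n + 2) < a (n + 1) * continuant a (n + 2) + continuant a (n + 1)
    nlinarith [ha (n + 1), pos ha n, pos ha (n + 1)]

end continuant

theorem Real.convergent_eq_continuant {x : ℕ → ℝ} {a : ℕ → ℤ}
    (hx : ∀ k, x (k + 1) = (Int.fract (x k))⁻¹) (hfloor : ∀ k, ⌊x k⌋ = a k)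
    (ha : ∀ k, 1 ≤ a k) (n : ℕ) :
    (x 0).convergent n = continuant a (n + 2) / continuant (fun i ↦ a (i + 1)) (n + 1) := by
  induction n generalizing x a with
  | zero => simp [continuant, hfloor 0]
  | succ n ih =>
    have hden : (continuant (fun i ↦ a (i + 1)) (n + 2) : ℚ) ≠ 0 := by
      exact_mod_cast (continuant.pos (fun k ↦ ha (k + 1)) (n + 1)).ne'
    rw [convergent_succ, ← hx,
      ih (fun k ↦ hx (k + 1)) (fun k ↦ hfloor (k + 1)) (fun k ↦ ha (k + 1)), hfloor 0,
      continuant.add_two_eq_head a (n + 1)]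
    field_simp
    push_cast
    ring

theorem Irrational.eq_of_add_div_eq_add_div {ξ : ℝ} (hξ : Irrational ξ) {r s r' s' : ℤ}
    (hs : s ≠ 0) (hs' : s' ≠ 0) (h : (ξ + r) / s = (ξ + r') / s') : r = r' ∧ s = s' := by
  rw [div_eq_div_iff (by exact_mod_cast hs) (by exact_mod_cast hs')] at h
  obtain rfl : s = s' := by
    by_contra hne
    refine (hξ.mul_intCast (sub_ne_zero.2 (Ne.symm hne))).ne_int (r' * s - r * s') ?_
    push_cast
    linarith
  refine ⟨?_, rfl⟩
  have := mul_right_cancel₀ (by exact_mod_cast hs : (s : ℝ) ≠ 0) h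
  exact_mod_cast add_left_cancel this

theorem bounds_of_floor_step {ξ r s a r' s' : ℝ} (hs : 0 < s) (hr : r < ξ) (ha : 1 ≤ a)
    (hlo : a * s ≤ ξ + r) (hhi : ξ + r < (a + 1) * s) (hr' : r' = a * s - r) (hr'ξ : r' ≠ ξ)
    (hss' : s * s' = ξ ^ 2 - r' ^ 2) :
    0 < s' ∧ r' < ξ ∧ s' < ξ + r' ∧ ξ - r' < s' := by
  have hr'lt : r' < ξ := lt_of_le_of_ne (by linarith) hr'ξ
  have hsub : ξ - r' < s := by linarith
  have hadd : s < ξ + r' := by nlinarith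
  have hss'' : s * s' = (ξ - r') * (ξ + r') := by rw [hss']; ring
  refine ⟨?_, hr'lt, ?_, ?_⟩
  · nlinarith [mul_pos (sub_pos.2 hr'lt) (hs.trans hadd)]
  · nlinarith [mul_lt_mul_of_pos_right hsub (hs.trans hadd)]
  · nlinarith [mul_lt_mul_of_pos_left hadd (sub_pos.2 hr'lt)]

theorem Pell.IsFundamental.eq_of_y_lt_y_sq {d : ℤ} {a₁ a : Pell.Solution₁ d}
    (h : Pell.IsFundamental a₁) (hx : 0 < a.x) (hy : 0 < a.y) (hlt : a.y < (a₁ ^ 2).y) :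
    a = a₁ := by
  obtain ⟨n, rfl⟩ := h.eq_pow_of_nonneg hx hy.le
  have h0 : (a₁ ^ (0 : ℤ)).y < (a₁ ^ (n : ℤ)).y := by simpa using hy
  have h2 : (a₁ ^ (n : ℤ)).y < (a₁ ^ (2 : ℤ)).y := by simpa using hlt
  rw [h.zpow_y_lt_iff_lt] at h0 h2
  obtain rfl : n = 1 := by omega
  exact pow_one a₁

section Chain

variable {f : ℕ}

def cfStep (f : ℕ) (p : ℤ × ℤ) : ℤ × ℤ :=
  let r' := Int.fdiv ((Nat.sqrt f : ℤ) + p.1) p.2 * p.2 - p.1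
  (r', Int.fdiv ((f : ℤ) - r' ^ 2) p.2)

theorem cfRS_succ (k : ℕ) : cfRS f (k + 1) = cfStep f (cfRS f k) := rfl

theorem cfRS_succ_fst (k : ℕ) : (cfRS f (k + 1)).1 = cfA f k * (cfRS f k).2 - (cfRS f k).1 := rfl

theorem cfRS_add_eq_of_eq {j j' : ℕ} (h : cfRS f j = cfRS f j') (t : ℕ) :
    cfRS f (j + t) = cfRS f (j' + t) := by
  induction t with
  | zero => exact h
  | succ t ih => rw [← add_assoc, ← add_assoc, cfRS_succ, cfRS_succ, ih]

theorem cfA_eq_of_cfRS_eq {j j' : ℕ} (h : cfRS f j = cfRS f j') : cfA f j = cfA f j' := by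
  rw [cfA, cfA, h]

theorem cfRS_snd_dvd_sub_sq_succ {k : ℕ} (h : (cfRS f k).2 ∣ (f : ℤ) - (cfRS f k).1 ^ 2) :
    (cfRS f k).2 ∣ (f : ℤ) - (cfRS f (k + 1)).1 ^ 2 := by
  have hsplit : (f : ℤ) - (cfRS f (k + 1)).1 ^ 2 = (f - (cfRS f k).1 ^ 2) +
      (cfRS f k).2 * (2 * cfA f k * (cfRS f k).1 - cfA f k ^ 2 * (cfRS f k).2) := by
    rw [cfRS_succ_fst]; ring
  rw [hsplit]
  exact dvd_add h (dvd_mul_right _ _)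

theorem cfRS_snd_mul_snd_succ_of_dvd {k : ℕ}
    (h : (cfRS f k).2 ∣ (f : ℤ) - (cfRS f (k + 1)).1 ^ 2) :
    (cfRS f k).2 * (cfRS f (k + 1)).2 = (f : ℤ) - (cfRS f (k + 1)).1 ^ 2 := by
  change (cfRS f k).2 * Int.fdiv ((f : ℤ) - (cfRS f (k + 1)).1 ^ 2) (cfRS f k).2 = _
  rw [Int.fdiv_eq_ediv_of_dvd h, Int.mul_ediv_cancel' h]

theorem cfRS_snd_dvd : ∀ k, (cfRS f k).2 ∣ (f : ℤ) - (cfRS f k).1 ^ 2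
  | 0 => one_dvd _
  | k + 1 => Dvd.intro_left _
      (cfRS_snd_mul_snd_succ_of_dvd (cfRS_snd_dvd_sub_sq_succ (cfRS_snd_dvd k)))

theorem cfRS_snd_mul_snd_succ (k : ℕ) :
    (cfRS f k).2 * (cfRS f (k + 1)).2 = (f : ℤ) - (cfRS f (k + 1)).1 ^ 2 :=
  cfRS_snd_mul_snd_succ_of_dvd (cfRS_snd_dvd_sub_sq_succ (cfRS_snd_dvd k))

theorem fdiv_natSqrt_add_eq_floor (r : ℤ) {s : ℤ} (hs : 0 < s) :
    Int.fdiv ((Nat.sqrt f : ℤ) + r) s = ⌊(√(f : ℝ) + r) / s⌋ := by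
  rw [Int.fdiv_eq_ediv_of_nonneg _ hs.le, Int.floor_div_intCast_of_pos _ hs, Int.floor_add_intCast,
    Real.floor_real_sqrt_eq_nat_sqrt]

theorem cfA_eq_floor {k : ℕ} (hs : 0 < (cfRS f k).2) :
    cfA f k = ⌊(√(f : ℝ) + (cfRS f k).1) / (cfRS f k).2⌋ :=
  fdiv_natSqrt_add_eq_floor _ hs

theorem one_le_cfA_of_lt {k : ℕ} (hs : 0 < (cfRS f k).2)
    (hsr : ((cfRS f k).2 : ℝ) < √(f : ℝ) + (cfRS f k).1) : 1 ≤ cfA f k := by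
  have hsR : (0 : ℝ) < (cfRS f k).2 := by exact_mod_cast hs
  rw [cfA_eq_floor hs]
  exact Int.le_floor.2 (by rw [Int.cast_one, one_le_div hsR]; exact hsr.le)

end Chain

section Bounds

variable {f : ℕ}

theorem Nat.one_lt_of_not_isSquare (hns : ¬ IsSquare f) : 1 < f := by
  by_contra! hf
  interval_cases f
  exacts [hns ⟨0, rfl⟩, hns ⟨1, rfl⟩]

theorem one_lt_sqrt_of_not_isSquare (hns : ¬ IsSquare f) : 1 < √(f : ℝ) :=
  Real.lt_sqrt_of_sq_lt (by rw [one_pow]; exact_mod_cast Nat.one_lt_of_not_isSquare hns)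

theorem cfRS_succ_bounds (hns : ¬ IsSquare f) {k : ℕ}
    (h : 0 < (cfRS f k).2 ∧ ((cfRS f k).1 : ℝ) < √(f : ℝ) ∧
      ((cfRS f k).2 : ℝ) < √(f : ℝ) + (cfRS f k).1) :
    0 < (cfRS f (k + 1)).2 ∧ ((cfRS f (k + 1)).1 : ℝ) < √(f : ℝ) ∧
      ((cfRS f (k + 1)).2 : ℝ) < √(f : ℝ) + (cfRS f (k + 1)).1 ∧
      √(f : ℝ) - (cfRS f (k + 1)).1 < (cfRS f (k + 1)).2 := by
  obtain ⟨hs, hr, hsr⟩ := h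
  have hsR : (0 : ℝ) < (cfRS f k).2 := by exact_mod_cast hs
  have hfloor := cfA_eq_floor hs
  have ha : (1 : ℝ) ≤ cfA f k := by exact_mod_cast one_le_cfA_of_lt hs hsr
  have hlo : (cfA f k : ℝ) * (cfRS f k).2 ≤ √(f : ℝ) + (cfRS f k).1 :=
    (le_div_iff₀ hsR).1 (hfloor ▸ Int.floor_le _)
  have hhi : √(f : ℝ) + (cfRS f k).1 < (cfA f k + 1) * (cfRS f k).2 :=
    (div_lt_iff₀ hsR).1 (hfloor ▸ Int.lt_floor_add_one _)
  have hmul : ((cfRS f k).2 : ℝ) * (cfRS f (k + 1)).2 = √(f : ℝ) ^ 2 - (cfRS f (k + 1)).1 ^ 2 := by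
    rw [Real.sq_sqrt (Nat.cast_nonneg f)]
    exact_mod_cast cfRS_snd_mul_snd_succ k
  obtain ⟨hs', hbounds⟩ := bounds_of_floor_step hsR hr ha hlo hhi
    (by rw [cfRS_succ_fst]; push_cast; ring) ((irrational_sqrt_natCast_iff.2 hns).ne_int _).symm
    hmul
  exact ⟨by exact_mod_cast hs', hbounds⟩

theorem cfRS_bounds (hns : ¬ IsSquare f) : ∀ k,
    0 < (cfRS f k).2 ∧ ((cfRS f k).1 : ℝ) < √(f : ℝ) ∧
      ((cfRS f k).2 : ℝ) < √(f : ℝ) + (cfRS f k).1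
  | 0 => by
    have := one_lt_sqrt_of_not_isSquare hns
    simp only [cfRS, Int.cast_zero, Int.cast_one, add_zero]
    exact ⟨one_pos, by linarith, this⟩
  | k + 1 =>
    let ⟨hs, hr, hsr, _⟩ := cfRS_succ_bounds hns (cfRS_bounds hns k)
    ⟨hs, hr, hsr⟩

theorem cfRS_snd_pos (hns : ¬ IsSquare f) (k : ℕ) : 0 < (cfRS f k).2 :=
  (cfRS_bounds hns k).1

theorem cfRS_fst_lt_sqrt (hns : ¬ IsSquare f) (k : ℕ) : ((cfRS f k).1 : ℝ) < √(f : ℝ) :=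
  (cfRS_bounds hns k).2.1

theorem sqrt_sub_cfRS_fst_lt (hns : ¬ IsSquare f) (k : ℕ) :
    √(f : ℝ) - (cfRS f (k + 1)).1 < (cfRS f (k + 1)).2 :=
  (cfRS_succ_bounds hns (cfRS_bounds hns k)).2.2.2

theorem one_le_cfA (hns : ¬ IsSquare f) (k : ℕ) : 1 ≤ cfA f k :=
  one_le_cfA_of_lt (cfRS_bounds hns k).1 (cfRS_bounds hns k).2.2

end Bounds

section Convergents

variable {f : ℕ}

/-- The complete quotient `ξₖ = (√f + rₖ) / sₖ`, so that `√f = [a₀; a₁, …, a_{k-1}, ξₖ]`. -/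
noncomputable def cfCompleteQuot (f k : ℕ) : ℝ := (√(f : ℝ) + (cfRS f k).1) / (cfRS f k).2

theorem cfCompleteQuot_zero : cfCompleteQuot f 0 = √(f : ℝ) := by
  simp [cfCompleteQuot, cfRS]

theorem floor_cfCompleteQuot (hns : ¬ IsSquare f) (k : ℕ) : ⌊cfCompleteQuot f k⌋ = cfA f k :=
  (cfA_eq_floor (cfRS_snd_pos hns k)).symm

theorem cfCompleteQuot_succ (hns : ¬ IsSquare f) (k : ℕ) :
    cfCompleteQuot f (k + 1) = (Int.fract (cfCompleteQuot f k))⁻¹ := by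
  have hs : ((cfRS f k).2 : ℝ) ≠ 0 := by exact_mod_cast (cfRS_snd_pos hns k).ne'
  have hs' : ((cfRS f (k + 1)).2 : ℝ) ≠ 0 := by exact_mod_cast (cfRS_snd_pos hns (k + 1)).ne'
  have hr' : √(f : ℝ) - (cfRS f (k + 1)).1 ≠ 0 := (sub_pos.2 (cfRS_fst_lt_sqrt hns _)).ne'
  have hmul : ((cfRS f k).2 : ℝ) * (cfRS f (k + 1)).2 = √(f : ℝ) ^ 2 - (cfRS f (k + 1)).1 ^ 2 := by
    rw [Real.sq_sqrt (Nat.cast_nonneg f)]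
    exact_mod_cast cfRS_snd_mul_snd_succ k
  have hfract :
      Int.fract (cfCompleteQuot f k) = (√(f : ℝ) - (cfRS f (k + 1)).1) / (cfRS f k).2 := by
    rw [Int.fract, floor_cfCompleteQuot hns, cfCompleteQuot, cfRS_succ_fst]
    field_simp
    push_cast
    ring
  rw [hfract, inv_div, cfCompleteQuot, div_eq_div_iff hs' hr']
  linear_combination -hmul

theorem cfNum_eq_continuant : ∀ n, cfNum f n = continuant (cfA f) n
  | 0 => rfl
  | 1 => rfl
  | n + 2 => by rw [cfNum, continuant, cfNum_eq_continuant (n + 1), cfNum_eq_continuant n]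

theorem cfDen_succ_eq_continuant : ∀ n, cfDen f (n + 1) = continuant (fun i ↦ cfA f (i + 1)) n
  | 0 => rfl
  | 1 => by simp [cfDen, continuant]
  | n + 2 => by
    rw [cfDen, continuant, cfDen_succ_eq_continuant (n + 1), cfDen_succ_eq_continuant n]

theorem convergent_sqrt (hns : ¬ IsSquare f) (n : ℕ) :
    (√(f : ℝ)).convergent n = cfNum f (n + 2) / cfDen f (n + 2) := by
  rw [← cfCompleteQuot_zero, Real.convergent_eq_continuant (cfCompleteQuot_succ hns)
    (floor_cfCompleteQuot hns) (one_le_cfA hns), cfNum_eq_continuant, cfDen_succ_eq_continuant]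

theorem cfNum_pos (hns : ¬ IsSquare f) (n : ℕ) : 0 < cfNum f (n + 1) :=
  cfNum_eq_continuant (n + 1) ▸ continuant.pos (one_le_cfA hns) n

theorem cfDen_pos (hns : ¬ IsSquare f) (n : ℕ) : 0 < cfDen f (n + 2) :=
  cfDen_succ_eq_continuant (n + 1) ▸ continuant.pos (fun k ↦ one_le_cfA hns (k + 1)) n

theorem cfNum_add_two_strictMono (hns : ¬ IsSquare f) : StrictMono fun n ↦ cfNum f (n + 2) := by
  simpa only [cfNum_eq_continuant] using continuant.strictMono_add_two (one_le_cfA hns)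

theorem cfDen_succ_monotone (hns : ¬ IsSquare f) : Monotone fun n ↦ cfDen f (n + 1) := by
  simpa only [cfDen_succ_eq_continuant] using continuant.monotone fun k ↦ one_le_cfA hns (k + 1)

theorem cfNum_mul_cfDen_sub : ∀ k,
    cfNum f (k + 1) * cfDen f k - cfNum f k * cfDen f (k + 1) = (-1) ^ k
  | 0 => by simp [cfNum, cfDen]
  | k + 1 => by
    rw [cfNum, cfDen, pow_succ]
    linear_combination -cfNum_mul_cfDen_sub k

theorem isCoprime_cfNum_cfDen (k : ℕ) : IsCoprime (cfNum f (k + 1)) (cfDen f (k + 1)) := by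
  rcases neg_one_pow_eq_or ℤ k with h | h
  · exact ⟨cfDen f k, -cfNum f k, by linear_combination cfNum_mul_cfDen_sub k + h⟩
  · exact ⟨-cfDen f k, cfNum f k, by linear_combination -cfNum_mul_cfDen_sub k - h⟩

/-- The identities `√f = (Aₖ₋₁ ξₖ + Aₖ₋₂) / (Bₖ₋₁ ξₖ + Bₖ₋₂)`, split into rational and irrational
parts. -/
theorem cfNum_cfDen_eqs (hns : ¬ IsSquare f) : ∀ k,
    (f : ℤ) * cfDen f (k + 1) = (cfRS f k).1 * cfNum f (k + 1) + (cfRS f k).2 * cfNum f k ∧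
      cfNum f (k + 1) = (cfRS f k).1 * cfDen f (k + 1) + (cfRS f k).2 * cfDen f k
  | 0 => by simp [cfNum, cfDen, cfRS]
  | k + 1 => by
    obtain ⟨h1, h2⟩ := cfNum_cfDen_eqs hns k
    have hs : (cfRS f k).2 ≠ 0 := (cfRS_snd_pos hns k).ne'
    have hmul := cfRS_snd_mul_snd_succ (f := f) k
    have hr := cfRS_succ_fst (f := f) k
    rw [cfNum, cfDen]
    constructor <;> refine mul_left_cancel₀ hs ?_
    · linear_combination (cfRS f (k + 1)).1 * h1 - (f : ℤ) * h2 - cfNum f (k + 1) * hmul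
        - ((f : ℤ) * cfDen f (k + 1) - (cfRS f (k + 1)).1 * cfNum f (k + 1)) * hr
    · linear_combination -h1 + (cfRS f (k + 1)).1 * h2 - cfDen f (k + 1) * hmul
        - (cfNum f (k + 1) - (cfRS f (k + 1)).1 * cfDen f (k + 1)) * hr

theorem cfNum_sq_sub_mul_cfDen_sq (hns : ¬ IsSquare f) (k : ℕ) :
    cfNum f (k + 1) ^ 2 - (f : ℤ) * cfDen f (k + 1) ^ 2 = (-1) ^ k * (cfRS f k).2 := by
  obtain ⟨h1, h2⟩ := cfNum_cfDen_eqs hns k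
  linear_combination cfNum f (k + 1) * h2 - cfDen f (k + 1) * h1 +
    (cfRS f k).2 * cfNum_mul_cfDen_sub k

end Convergents

section Legendre

variable {f : ℕ}

theorem abs_sqrt_sub_div_lt_of_pell (hf : 0 < f) {c h : ℤ} (hc : 0 < c) (hh : 0 < h)
    (hp : c ^ 2 - f * h ^ 2 = 1) : |√(f : ℝ) - c / h| < 1 / (2 * h ^ 2) := by
  have hξ : √(f : ℝ) ^ 2 = f := Real.sq_sqrt (Nat.cast_nonneg f)
  have hξ1 : 1 ≤ √(f : ℝ) := Real.one_le_sqrt.2 (by exact_mod_cast hf)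
  have hhR : (0 : ℝ) < h := by exact_mod_cast hh
  have hpR : (c : ℝ) ^ 2 - f * h ^ 2 = 1 := by exact_mod_cast hp
  have hch : (h : ℝ) < c := by
    have : h < c := by nlinarith
    exact_mod_cast this
  have hprod : (c - h * √(f : ℝ)) * (c + h * √(f : ℝ)) = 1 := by
    linear_combination hpR - (h : ℝ) ^ 2 * hξ
  have hsum : 2 * (h : ℝ) < c + h * √(f : ℝ) := by nlinarith
  have hdiff : 0 < (c : ℝ) - h * √(f : ℝ) := by nlinarith
  rw [abs_sub_comm, abs_of_pos (by rw [sub_pos, lt_div_iff₀ hhR]; linarith),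
    div_sub' hhR.ne', div_lt_div_iff₀ hhR (by positivity)]
  nlinarith [mul_pos hdiff hhR]

theorem exists_eq_cfNum_of_pell (hns : ¬ IsSquare f) {c h : ℤ} (hc : 0 < c) (hh : 0 < h)
    (hp : c ^ 2 - f * h ^ 2 = 1) :
    ∃ n, c = cfNum f (n + 2) ∧ h = cfDen f (n + 2) ∧ (cfRS f (n + 1)).2 = 1 := by
  have hf : 0 < f := zero_lt_one.trans (Nat.one_lt_of_not_isSquare hns)
  have hcop : Nat.Coprime c.natAbs h.natAbs :=
    Int.isCoprime_iff_nat_coprime.1 ⟨c, -f * h, by linear_combination hp⟩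
  have hden : (((c / h : ℚ)).den : ℝ) = h := by exact_mod_cast Rat.den_div_eq_of_coprime hh hcop
  obtain ⟨n, hn⟩ := Real.exists_rat_eq_convergent (ξ := √(f : ℝ)) (q := c / h)
    (by rw [hden]; push_cast; exact abs_sqrt_sub_div_lt_of_pell hf hc hh hp)
  rw [convergent_sqrt hns] at hn
  obtain ⟨rfl, rfl⟩ := Rat.div_int_inj hh (cfDen_pos hns n) hcop
    (Int.isCoprime_iff_nat_coprime.1 (isCoprime_cfNum_cfDen (n + 1))) hn
  refine ⟨n, rfl, rfl, ?_⟩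
  have hsign := cfNum_sq_sub_mul_cfDen_sq hns (n + 1)
  have hs := cfRS_snd_pos hns (n + 1)
  rcases neg_one_pow_eq_or ℤ (n + 1) with h | h <;> rw [h] at hsign <;> linarith

end Legendre

section Periods

variable {f : ℕ}

theorem cfRS_fst_eq_of_snd_eq_one (hns : ¬ IsSquare f) {k : ℕ} (hs : (cfRS f (k + 1)).2 = 1) :
    (cfRS f (k + 1)).1 = Nat.sqrt f := by
  have h1 := sqrt_sub_cfRS_fst_lt hns k
  have h2 := cfRS_fst_lt_sqrt hns (k + 1)
  rw [hs, Int.cast_one] at h1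
  rw [← Real.floor_real_sqrt_eq_nat_sqrt, eq_comm, Int.floor_eq_iff]
  constructor <;> linarith

theorem cfRS_fst_one : (cfRS f 1).1 = Nat.sqrt f := by
  simp [cfRS]

theorem cfRS_add_two_eq_cfRS_one (hns : ¬ IsSquare f) {k : ℕ} (hs : (cfRS f (k + 1)).2 = 1) :
    cfRS f (k + 2) = cfRS f 1 := by
  have hk : cfRS f (k + 1) = ((Nat.sqrt f : ℤ), 1) := Prod.ext (cfRS_fst_eq_of_snd_eq_one hns hs) hs
  rw [cfRS_succ, hk]
  simp [cfStep, cfRS]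

theorem cfIsPeriod_of_snd_eq_one (hns : ¬ IsSquare f) {k : ℕ} (hs : (cfRS f (k + 1)).2 = 1) :
    CFIsPeriod f (k + 1) := by
  refine ⟨k.succ_pos, fun j hj ↦ cfA_eq_of_cfRS_eq ?_⟩
  obtain ⟨t, rfl⟩ := Nat.exists_eq_add_of_le hj
  rw [show 1 + t + (k + 1) = k + 2 + t by ring]
  exact cfRS_add_eq_of_eq (cfRS_add_two_eq_cfRS_one hns hs) t

theorem CFPeriod.dvd {p q : ℕ} (hp : CFPeriod f p) (hq : CFIsPeriod f q) : p ∣ q := by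
  have hmul (t k : ℕ) (hk : 1 ≤ k) : cfA f (k + t * p) = cfA f k := by
    induction t with
    | zero => simp
    | succ t ih => rw [add_mul, one_mul, ← add_assoc, hp.1.2 _ (by omega), ih]
  rw [Nat.dvd_iff_mod_eq_zero]
  by_contra hr
  refine (Nat.mod_lt q hp.1.1).not_ge (hp.2 _ ⟨Nat.pos_of_ne_zero hr, fun k hk ↦ ?_⟩)
  calc cfA f (k + q % p) = cfA f (k + q % p + q / p * p) := (hmul _ _ (by omega)).symm
    _ = cfA f (k + q) := by rw [add_assoc, Nat.mod_add_div']
    _ = cfA f k := hq.2 k hk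

theorem CFIsPeriod.cfRS_add_one (hns : ¬ IsSquare f) {p : ℕ} (hp : CFIsPeriod f p) :
    cfRS f (p + 1) = cfRS f 1 := by
  have hquot : cfCompleteQuot f (p + 1) = cfCompleteQuot f 1 :=
    Real.eq_of_floor_eq (x := fun k ↦ cfCompleteQuot f (p + 1 + k))
      (y := fun k ↦ cfCompleteQuot f (1 + k)) (fun _ ↦ cfCompleteQuot_succ hns _)
      (fun _ ↦ cfCompleteQuot_succ hns _) fun k ↦ by
        simp only [floor_cfCompleteQuot hns]
        rw [show p + 1 + k = 1 + k + p by ring]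
        exact hp.2 _ (by omega)
  obtain ⟨hr, hs⟩ := (irrational_sqrt_natCast_iff.2 hns).eq_of_add_div_eq_add_div
    (cfRS_snd_pos hns _).ne' (cfRS_snd_pos hns _).ne' hquot
  exact Prod.ext hr hs

theorem CFIsPeriod.cfRS_snd_eq_one (hns : ¬ IsSquare f) {p : ℕ} (hp : CFIsPeriod f p) :
    (cfRS f p).2 = 1 := by
  have hmul := cfRS_snd_mul_snd_succ (f := f) p
  rw [hp.cfRS_add_one hns, ← cfRS_snd_mul_snd_succ 0] at hmul
  exact mul_right_cancel₀ (cfRS_snd_pos hns 1).ne' (hmul.trans rfl)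

end Periods

section Palindrome

variable {f : ℕ}

/-- Run backwards, the pairs `(r_{k+1}, s_k)` obey the same recursion as the pairs `(rₖ, sₖ)`. -/
theorem cfStep_reverse (hns : ¬ IsSquare f) (k : ℕ) :
    cfStep f ((cfRS f (k + 2)).1, (cfRS f (k + 1)).2) = ((cfRS f (k + 1)).1, (cfRS f k).2) := by
  have hs := cfRS_snd_pos hns (k + 1)
  have hsR : (0 : ℝ) < (cfRS f (k + 1)).2 := by exact_mod_cast hs
  have hr : (cfRS f (k + 2)).1 = cfA f (k + 1) * (cfRS f (k + 1)).2 - (cfRS f (k + 1)).1 :=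
    cfRS_succ_fst (k + 1)
  have ha :
      Int.fdiv ((Nat.sqrt f : ℤ) + (cfRS f (k + 2)).1) (cfRS f (k + 1)).2 = cfA f (k + 1) := by
    have h1 := sqrt_sub_cfRS_fst_lt hns k
    have h2 := cfRS_fst_lt_sqrt hns (k + 1)
    rw [fdiv_natSqrt_add_eq_floor _ hs, Int.floor_eq_iff, le_div_iff₀ hsR, div_lt_iff₀ hsR, hr]
    push_cast
    constructor <;> linarith
  have hr' : cfA f (k + 1) * (cfRS f (k + 1)).2 - (cfRS f (k + 2)).1 = (cfRS f (k + 1)).1 := by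
    rw [hr]; ring
  simp only [cfStep]
  rw [ha, hr', ← cfRS_snd_mul_snd_succ k, Int.mul_fdiv_cancel _ hs.ne']

theorem cfRS_palindrome (hns : ¬ IsSquare f) {p : ℕ} (hp : (cfRS f (p + 1)).2 = 1) (i j : ℕ)
    (hij : i + j = p) : ((cfRS f (i + 1)).1, (cfRS f i).2) = cfRS f (j + 1) := by
  induction j generalizing i with
  | zero =>
    obtain rfl : i = p := hij
    have hr : (cfRS f (i + 2)).1 = (cfRS f (i + 1)).1 := by
      rw [cfRS_add_two_eq_cfRS_one hns hp, cfRS_fst_one, cfRS_fst_eq_of_snd_eq_one hns hp]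
    rw [← cfStep_reverse hns i, hr, ← cfRS_succ, cfRS_add_two_eq_cfRS_one hns hp]
  | succ j ih =>
    rw [← cfStep_reverse hns i, ih (i + 1) (by omega), ← cfRS_succ]

theorem cfRS_fst_succ_eq_of_snd_two_mul (hns : ¬ IsSquare f) {m : ℕ} (hm : 0 < m)
    (hs : (cfRS f (2 * m)).2 = 1) : (cfRS f (m + 1)).1 = (cfRS f m).1 := by
  obtain ⟨m, rfl⟩ := Nat.exists_eq_add_one.2 hm
  rw [show 2 * (m + 1) = 2 * m + 1 + 1 by ring] at hs
  simpa using congrArg Prod.fst (cfRS_palindrome hns hs (m + 1) m (by ring))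

end Palindrome

section Pell

variable {f : ℕ} {c h : ℤ}

theorem IsFundamentalPell.isFundamental (hf : 0 < f) (hfund : IsFundamentalPell f c h) :
    Pell.IsFundamental (Pell.Solution₁.mk c h hfund.2.2.1) := by
  obtain ⟨hc, hh, hp, hmin⟩ := hfund
  refine ⟨?_, hh, fun {b} hb ↦ hmin b.x |b.y| (by omega)
    (abs_pos.2 (Pell.Solution₁.y_ne_zero_of_one_lt_x hb)) (by rw [sq_abs]; exact b.prop)⟩
  have hfh : 0 < (f : ℤ) * h ^ 2 := by positivity
  show 1 < c
  nlinarith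

theorem IsFundamentalPell.eq_of_lt (hf : 0 < f) (hfund : IsFundamentalPell f c h) {c' h' : ℤ}
    (hc' : 0 < c') (hh' : 0 < h') (hp : c' ^ 2 - f * h' ^ 2 = 1) (hlt : h' < 2 * c * h) :
    c' = c ∧ h' = h := by
  have heq := (hfund.isFundamental hf).eq_of_y_lt_y_sq (a := .mk c' h' hp) hc' hh' (by
    simp only [pow_two, Pell.Solution₁.y_mul, Pell.Solution₁.x_mk, Pell.Solution₁.y_mk]
    linarith)
  exact ⟨congrArg Pell.Solution₁.x heq, congrArg Pell.Solution₁.y heq⟩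

/-- Here `c₁ + h₁√f = (Aₘ₋₁ + Bₘ₋₁√f)² / sₘ`; the symmetry `rₘ₊₁ = rₘ` makes it integral. -/
theorem exists_pell_of_cfRS_fst_succ_eq (hns : ¬ IsSquare f) {m : ℕ} (hm : Odd m)
    (hsym : (cfRS f (m + 1)).1 = (cfRS f m).1) :
    ∃ c₁ h₁ : ℤ, (cfRS f m).2 * c₁ = cfNum f (m + 1) ^ 2 + f * cfDen f (m + 1) ^ 2 ∧
      (cfRS f m).2 * h₁ = 2 * cfNum f (m + 1) * cfDen f (m + 1) ∧ c₁ ^ 2 - f * h₁ ^ 2 = 1 := by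
  obtain ⟨h1, h2⟩ := cfNum_cfDen_eqs hns m
  have hnorm := cfNum_sq_sub_mul_cfDen_sq hns m
  rw [hm.neg_one_pow, neg_one_mul] at hnorm
  have hrs : 2 * (cfRS f m).1 = cfA f m * (cfRS f m).2 := by
    have := cfRS_succ_fst (f := f) m
    rw [hsym] at this
    linarith
  set A := cfNum f (m + 1)
  set B := cfDen f (m + 1)
  set s := (cfRS f m).2
  have hc₁ : s * (cfA f m * A * B + A * cfDen f m + cfNum f m * B) = A ^ 2 + f * B ^ 2 := by
    linear_combination -A * h2 - B * h1 - A * B * hrs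
  have hh₁ : s * (cfA f m * B ^ 2 + 2 * B * cfDen f m) = 2 * A * B := by
    linear_combination -2 * B * h2 - B ^ 2 * hrs
  refine ⟨_, _, hc₁, hh₁, mul_left_cancel₀ (pow_ne_zero 2 (cfRS_snd_pos hns m).ne') ?_⟩
  linear_combination
    (s * (cfA f m * A * B + A * cfDen f m + cfNum f m * B) + A ^ 2 + f * B ^ 2) * hc₁
    - f * (s * (cfA f m * B ^ 2 + 2 * B * cfDen f m) + 2 * A * B) * hh₁
    + (A ^ 2 - f * B ^ 2 - s) * hnorm

end Pell

theorem stmt_12_general (f m : ℕ) (hns : ¬ IsSquare f) (hm : Odd m)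
    (hper : CFPeriod f (2 * m)) (c h : ℤ) (hfund : IsFundamentalPell f c h) :
    h * cfNum f (m + 1) - (c - 1) * cfDen f (m + 1) = 0 := by
  have hf : 0 < f := zero_lt_one.trans (Nat.one_lt_of_not_isSquare hns)
  obtain ⟨n, hc, hh, hsn⟩ := exists_eq_cfNum_of_pell hns hfund.1 hfund.2.1 hfund.2.2.1
  have hmn : 2 * m ≤ n + 1 :=
    Nat.le_of_dvd n.succ_pos (hper.dvd (cfIsPeriod_of_snd_eq_one hns hsn))
  obtain ⟨c₁, h₁, hc₁, hh₁, hpell⟩ := exists_pell_of_cfRS_fst_succ_eq hns hm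
    (cfRS_fst_succ_eq_of_snd_two_mul hns hm.pos (hper.1.cfRS_snd_eq_one hns))
  have hnorm := cfNum_sq_sub_mul_cfDen_sq hns m
  rw [hm.neg_one_pow, neg_one_mul] at hnorm
  obtain ⟨k, rfl⟩ := Nat.exists_eq_add_one.2 hm.pos
  have hs := cfRS_snd_pos hns (k + 1)
  have hA := cfNum_pos hns (k + 1)
  have hB := cfDen_pos hns k
  have hAc : cfNum f (k + 2) < c := hc ▸ cfNum_add_two_strictMono hns (show k < n by omega)
  have hBh : cfDen f (k + 2) ≤ h := hh ▸ cfDen_succ_monotone hns (show k + 1 ≤ n + 1 by omega)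
  have hc₁pos : 0 < c₁ := pos_of_mul_pos_right (by rw [hc₁]; positivity) hs.le
  have hh₁pos : 0 < h₁ := pos_of_mul_pos_right (by rw [hh₁]; positivity) hs.le
  have hlt : h₁ < 2 * c * h := by
    calc h₁ ≤ (cfRS f (k + 1)).2 * h₁ := le_mul_of_one_le_left hh₁pos.le hs
      _ = 2 * cfNum f (k + 2) * cfDen f (k + 2) := hh₁
      _ < 2 * c * h := by nlinarith
  obtain ⟨rfl, rfl⟩ := hfund.eq_of_lt hf hc₁pos hh₁pos hpell hlt
  refine mul_left_cancel₀ hs.ne' ?_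
  linear_combination cfNum f (k + 2) * hh₁ - cfDen f (k + 2) * hc₁ + cfDen f (k + 2) * hnorm

theorem stmt_12 (f m : ℕ) (hf : 0 < f) (hns : ¬ IsSquare f) (hm : Odd m)
    (hper : CFPeriod f (2 * m)) (c h : ℤ) (hfund : IsFundamentalPell f c h) :
    h * cfNum f (m + 1) - (c - 1) * cfDen f (m + 1) = 0 :=
  stmt_12_general f m hns hm hper c h hfund
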